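/- In the 2-layer GUHAT construction for PALINDROMES, with input function f(σ,i,n) = (σ,i,n), layer-1 attention f^att((σ,i,n),(σ',j,n)) = indicator of (j = n−i) ∨ (i = j = n), layer-1 activation producing (1,i) if the attended symbol differs from xᵢ or i = n, else (0,i), layer-2 attention returning the first component s of the attended value (so attending to the leftmost position with s = 1), layer-2 activation producing (i,j) where j is the attended position, and output g((i,j)) = [i = j]: the Transformer accepts x₁…x_{n−1}$ if and only if x₁…x_{n−1} is a palindrome. -/
import Mathlib


open Classical in
/-- The leftmost position maximizing the attention scores `a` (unique hard attention). -/
noncomputable def leftmostArgmax {n : ℕ} (hn : 0 < n) (a : Fin n → ℝ) : Fin n :=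
  have : Nonempty (Fin n) := ⟨⟨0, hn⟩⟩
  (Finset.univ.filter (fun j => ∀ l, a l ≤ a j)).min'
    (by
      obtain ⟨j, hj⟩ := Finite.exists_max a
      exact ⟨j, Finset.mem_filter.mpr ⟨Finset.mem_univ _, hj⟩⟩)

/-- A generalized (unique hard attention) Transformer over alphabet `σ`, with `K` layers
and `H` heads: arbitrary activation values `A`, an input function `f` (taking the symbol,
which may be the end-of-sequence marker `$ = Sum.inr ()`, the position, and the input
length), real-valued attention functions for each layer `k ∈ [1..K]` and head
`h ∈ [1..H]`, activation functions for each layer, and a `{0,1}`-valued output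
function `g`. -/
structure GT (σ : Type) where
  K : ℕ
  H : ℕ
  A : Type
  f : (σ ⊕ Unit) → ℕ → ℕ → A
  fatt : ℕ → ℕ → A → A → ℝ
  fact : ℕ → A → (Fin H → A) → A
  g : A → Bool

namespace GT

variable {σ : Type}

/-- The input sequence of symbols for input string `x`, with `$` appended. -/
def inputSeq (x : List σ) : Fin (x.length + 1) → (σ ⊕ Unit) := fun i =>
  if h : (i : ℕ) < x.length then Sum.inl (x.get ⟨i, h⟩) else Sum.inr ()

/-- Initial (layer-0) activation values `y⁰ᵢ = f(xᵢ, i, n)` (positions are `1`-based). -/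
def y0 (T : GT σ) (x : List σ) : Fin (x.length + 1) → T.A := fun i =>
  T.f (inputSeq x i) ((i : ℕ) + 1) (x.length + 1)

/-- One layer of unique-hard-attention computation: each position attends, for each
head, to the leftmost position maximizing the attention score, and applies the
activation function. Layers are numbered `1, …, K`. -/
noncomputable def layer (T : GT σ) {n : ℕ} (hn : 0 < n) (k : ℕ) (y : Fin n → T.A) :
    Fin n → T.A := fun i =>
  T.fact k (y i)
    (fun _h => y (leftmostArgmax hn (fun j => T.fatt k (_h : Fin T.H).val.succ (y i) (y j))))

/-- The activation values at layer `k` (layer `0` being the initial activations). -/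
noncomputable def acts (T : GT σ) {n : ℕ} (hn : 0 < n) (y₀ : Fin n → T.A) :
    ℕ → Fin n → T.A
  | 0 => y₀
  | k + 1 => T.layer hn (k + 1) (T.acts hn y₀ k)

/-- `T` accepts `x` iff the output function applied to the final-layer activation at the
last position of `x$` equals `1`. -/
noncomputable def accepts (T : GT σ) (x : List σ) : Prop :=
  T.g (T.acts (Nat.succ_pos _) (T.y0 x) T.K ⟨x.length, Nat.lt_succ_self _⟩) = true

/-- The language recognized by `T`: `L(T) = {x ∈ σ* : T accepts x$}`. -/
def lang (T : GT σ) : Set (List σ) := {x | T.accepts x}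

end GT


open Classical in
lemma leftmostArgmax_mem {n : ℕ} (hn : 0 < n) (a : Fin n → ℝ) :
    leftmostArgmax hn a ∈ Finset.univ.filter (fun j => ∀ l, a l ≤ a j) := by
  unfold leftmostArgmax
  exact Finset.min'_mem _ _

open Classical in
lemma leftmostArgmax_isMax {n : ℕ} (hn : 0 < n) (a : Fin n → ℝ) (l : Fin n) :
    a l ≤ a (leftmostArgmax hn a) := by
  have h := leftmostArgmax_mem hn a
  rw [Finset.mem_filter] at h
  exact h.2 l

open Classical in
lemma leftmostArgmax_le {n : ℕ} (hn : 0 < n) (a : Fin n → ℝ) (j : Fin n)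
    (hj : ∀ l, a l ≤ a j) : leftmostArgmax hn a ≤ j := by
  unfold leftmostArgmax
  exact Finset.min'_le _ _ (Finset.mem_filter.mpr ⟨Finset.mem_univ _, hj⟩)

open Classical in
lemma leftmostArgmax_eq_of_unique {n : ℕ} (hn : 0 < n) (a : Fin n → ℝ) (j0 : Fin n)
    (h1 : ∀ l, a l ≤ a j0) (h2 : ∀ j, (∀ l, a l ≤ a j) → j = j0) :
    leftmostArgmax hn a = j0 := by
  have hm := leftmostArgmax_mem hn a
  rw [Finset.mem_filter] at hm
  exact h2 _ hm.2

open Classical in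
/-- The position attended to at layer 1 by position `i`. -/
noncomputable def palTgt {σ : Type} (x : List σ) (i : Fin (x.length + 1)) :
    Fin (x.length + 1) :=
  if _h : (i : ℕ) = x.length then i else ⟨x.length - 1 - (i : ℕ), by omega⟩

open Classical in
/-- The first component of the layer-1 activation at position `i`. -/
noncomputable def palSval {σ : Type} (x : List σ) (i : Fin (x.length + 1)) : ℕ :=
  if GT.inputSeq x (palTgt x i) ≠ GT.inputSeq x i ∨ (i : ℕ) + 1 = x.length + 1 then 1 else 0

open Classical in
/-- The concrete 2-layer, 1-head GUHAT construction for `PALINDROMES`: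
input function `f(σ,i,n) = (σ,i,n)`; layer-1 attention `[(j = n−i) ∨ (i = j = n)]`;
layer-1 activation `(1,i)` if the attended symbol differs from `xᵢ` or `i = n`, else
`(0,i)`; layer-2 attention returning the first component `s` of the attended value;
layer-2 activation `(i,j)` where `j` is the attended position; output `g((i,j)) = [i = j]`. -/
noncomputable def palT (σ : Type) : GT σ where
  K := 2
  H := 1
  A := ((σ ⊕ Unit) × ℕ × ℕ) ⊕ (ℕ × ℕ)
  f := fun c i n => Sum.inl (c, i, n)
  fatt := fun k _ y y' =>
    if k = 1 then
      match y, y' with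
      | Sum.inl (_, i, n), Sum.inl (_, j, _) =>
          if j = n - i ∨ (i = j ∧ j = n) then 1 else 0
      | _, _ => 0
    else
      match y' with
      | Sum.inr (s, _) => (s : ℝ)
      | _ => 0
  fact := fun k y b =>
    if k = 1 then
      match y, b 0 with
      | Sum.inl (c, i, n), Sum.inl (c', _, _) =>
          Sum.inr (if c' ≠ c ∨ i = n then 1 else 0, i)
      | _, _ => Sum.inr (0, 0)
    else
      match y, b 0 with
      | Sum.inr (_, i), Sum.inr (_, j) => Sum.inr (i, j)
      | _, _ => Sum.inr (0, 0)
  g := fun y =>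
    match y with
    | Sum.inr (i, j) => decide (i = j)
    | _ => false

/-- The 2-layer GUHAT construction for `PALINDROMES` is correct: it accepts
`x₁…x_{n−1}$` if and only if `x₁…x_{n−1}` is a palindrome. -/
theorem palT_correct (σ : Type) (x : List σ) :
    (palT σ).accepts x ↔ x.reverse = x := by
  classical
  have hy0' : ∀ i : Fin (x.length + 1),
      (palT σ).y0 x i = Sum.inl (GT.inputSeq x i, (i : ℕ) + 1, x.length + 1) := fun i => rfl
  -- Layer-1 attention scores
  have hatt1 : ∀ i j : Fin (x.length + 1),
      (palT σ).fatt 1 1 ((palT σ).y0 x i) ((palT σ).y0 x j) =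
        if ((j : ℕ) + 1 = (x.length + 1) - ((i : ℕ) + 1) ∨
            ((i : ℕ) + 1 = (j : ℕ) + 1 ∧ (j : ℕ) + 1 = x.length + 1)) then 1 else 0 := by
    intro i j; rfl
  have ha1tgt : ∀ i : Fin (x.length + 1),
      (palT σ).fatt 1 1 ((palT σ).y0 x i) ((palT σ).y0 x (palTgt x i)) = 1 := by
    intro i
    rw [hatt1]
    rw [if_pos]
    unfold palTgt
    split
    · rename_i h
      exact Or.inr ⟨rfl, by omega⟩
    · rename_i h
      have hi : (i : ℕ) < x.length + 1 := i.isLt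
      refine Or.inl ?_
      show x.length - 1 - (i : ℕ) + 1 = x.length + 1 - ((i : ℕ) + 1)
      omega
  have hamax1 : ∀ (hn : 0 < x.length + 1) (i : Fin (x.length + 1)),
      leftmostArgmax hn (fun j => (palT σ).fatt 1 1 ((palT σ).y0 x i) ((palT σ).y0 x j))
        = palTgt x i := by
    intro hn i
    apply leftmostArgmax_eq_of_unique
    · intro l
      rw [ha1tgt i, hatt1]
      split <;> norm_num
    · intro j hj
      have h1 : (1 : ℝ) ≤ (palT σ).fatt 1 1 ((palT σ).y0 x i) ((palT σ).y0 x j) := by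
        have := hj (palTgt x i); rwa [ha1tgt i] at this
      rw [hatt1] at h1
      have hcond : (j : ℕ) + 1 = (x.length + 1) - ((i : ℕ) + 1) ∨
          ((i : ℕ) + 1 = (j : ℕ) + 1 ∧ (j : ℕ) + 1 = x.length + 1) := by
        by_contra hc
        rw [if_neg hc] at h1
        norm_num at h1
      have hjL : (j : ℕ) < x.length + 1 := j.isLt
      have hiL : (i : ℕ) < x.length + 1 := i.isLt
      unfold palTgt
      split
      · rename_i h
        refine Fin.ext ?_
        show (j : ℕ) = (i : ℕ)
        omega
      · rename_i h
        refine Fin.ext ?_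
        show (j : ℕ) = x.length - 1 - (i : ℕ)
        omega
  -- Layer-1 activations
  have hacts1 : ∀ (hn : 0 < x.length + 1) (i : Fin (x.length + 1)),
      (palT σ).acts hn ((palT σ).y0 x) 1 i = Sum.inr (palSval x i, (i : ℕ) + 1) := by
    intro hn i
    show (palT σ).layer hn 1 ((palT σ).acts hn ((palT σ).y0 x) 0) i = _
    show (palT σ).fact 1 ((palT σ).y0 x i)
      (fun _h => (palT σ).y0 x
        (leftmostArgmax hn (fun j => (palT σ).fatt 1 1 ((palT σ).y0 x i) ((palT σ).y0 x j)))) = _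
    rw [hamax1 hn i]
    rfl
  -- Layer-2 attention scores
  have hsle : ∀ j, palSval x j ≤ 1 := by
    intro j; unfold palSval; split <;> norm_num
  have hse : palSval x (⟨x.length, Nat.lt_succ_self _⟩ : Fin (x.length + 1)) = 1 := by
    unfold palSval
    rw [if_pos (Or.inr rfl)]
  have hatt2 : ∀ (hn : 0 < x.length + 1) (j : Fin (x.length + 1)),
      (palT σ).fatt 2 1
        ((palT σ).acts hn ((palT σ).y0 x) 1 ⟨x.length, Nat.lt_succ_self _⟩)
        ((palT σ).acts hn ((palT σ).y0 x) 1 j) = ((palSval x j : ℕ) : ℝ) := by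
    intro hn j
    rw [hacts1 hn, hacts1 hn]
    rfl
  -- The final activation
  have hfinal : ∀ (hn : 0 < x.length + 1),
      (palT σ).acts hn ((palT σ).y0 x) 2 ⟨x.length, Nat.lt_succ_self _⟩ =
        Sum.inr (x.length + 1,
          ((leftmostArgmax hn (fun j => (palT σ).fatt 2 1
            ((palT σ).acts hn ((palT σ).y0 x) 1 ⟨x.length, Nat.lt_succ_self _⟩)
            ((palT σ).acts hn ((palT σ).y0 x) 1 j)) : Fin (x.length + 1)) : ℕ) + 1) := by
    intro hn
    show (palT σ).fact 2
      ((palT σ).acts hn ((palT σ).y0 x) 1 ⟨x.length, Nat.lt_succ_self _⟩)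
      (fun _h => (palT σ).acts hn ((palT σ).y0 x) 1
        (leftmostArgmax hn (fun j => (palT σ).fatt 2 1
          ((palT σ).acts hn ((palT σ).y0 x) 1 ⟨x.length, Nat.lt_succ_self _⟩)
          ((palT σ).acts hn ((palT σ).y0 x) 1 j)))) = _
    rw [hacts1 hn, hacts1 hn]
    rfl
  -- Acceptance condition
  have hacc : (palT σ).accepts x ↔
      ∀ j : Fin (x.length + 1), (j : ℕ) < x.length → palSval x j = 0 := by
    unfold GT.accepts
    have hK : (palT σ).K = 2 := rfl
    rw [hK, hfinal (Nat.succ_pos _)]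
    set hn := (Nat.succ_pos x.length : 0 < x.length + 1) with hhn
    set jstar := leftmostArgmax hn (fun j => (palT σ).fatt 2 1
      ((palT σ).acts hn ((palT σ).y0 x) 1 ⟨x.length, Nat.lt_succ_self _⟩)
      ((palT σ).acts hn ((palT σ).y0 x) 1 j)) with hjs
    have hgoal : ((palT σ).g (Sum.inr (x.length + 1, (jstar : ℕ) + 1)) = true) ↔
        (jstar : ℕ) = x.length := by
      show (decide (x.length + 1 = (jstar : ℕ) + 1) = true) ↔ _
      simp [eq_comm]
    rw [hgoal]
    constructor
    · intro hj j hjL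
      by_contra hs
      have hs1 : palSval x j = 1 := by have := hsle j; omega
      have hmax : ∀ l, (palT σ).fatt 2 1
          ((palT σ).acts hn ((palT σ).y0 x) 1 ⟨x.length, Nat.lt_succ_self _⟩)
          ((palT σ).acts hn ((palT σ).y0 x) 1 l) ≤
        (palT σ).fatt 2 1
          ((palT σ).acts hn ((palT σ).y0 x) 1 ⟨x.length, Nat.lt_succ_self _⟩)
          ((palT σ).acts hn ((palT σ).y0 x) 1 j) := by
        intro l
        rw [hatt2 hn, hatt2 hn, hs1]
        exact_mod_cast hsle l
      have hle : jstar ≤ j := by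
        rw [hjs]; exact leftmostArgmax_le hn _ j hmax
      have : (jstar : ℕ) ≤ (j : ℕ) := hle
      omega
    · intro hall
      have hmaxj := leftmostArgmax_isMax hn (fun j => (palT σ).fatt 2 1
        ((palT σ).acts hn ((palT σ).y0 x) 1 ⟨x.length, Nat.lt_succ_self _⟩)
        ((palT σ).acts hn ((palT σ).y0 x) 1 j)) ⟨x.length, Nat.lt_succ_self _⟩
      rw [← hjs] at hmaxj
      rw [hatt2 hn, hatt2 hn, hse] at hmaxj
      have h1 : (1 : ℝ) ≤ (palSval x jstar : ℕ) := by exact_mod_cast hmaxj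
      have hs : 1 ≤ palSval x jstar := by exact_mod_cast h1
      by_contra hne
      have hlt : (jstar : ℕ) < x.length := by have := jstar.isLt; omega
      have := hall jstar hlt
      omega
  rw [hacc]
  -- Relate to palindromes
  have hchar : ∀ j : Fin (x.length + 1), (j : ℕ) < x.length →
      (palSval x j = 0 ↔ ∀ (h1 : (j : ℕ) < x.length) (h2 : x.length - 1 - (j : ℕ) < x.length),
        x.get ⟨x.length - 1 - (j : ℕ), h2⟩ = x.get ⟨(j : ℕ), h1⟩) := by
    intro j hjL
    have hjx : (j : ℕ) < x.length := hjL
    have hrx : x.length - 1 - (j : ℕ) < x.length := by omega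
    have htgt : palTgt x j = ⟨x.length - 1 - (j : ℕ), by omega⟩ := by
      unfold palTgt
      rw [dif_neg (by omega)]
    have hin1 : GT.inputSeq x (palTgt x j) =
        Sum.inl (x.get ⟨x.length - 1 - (j : ℕ), hrx⟩) := by
      rw [htgt]
      unfold GT.inputSeq
      rw [dif_pos hrx]
    have hin2 : GT.inputSeq x j = Sum.inl (x.get ⟨(j : ℕ), hjx⟩) := by
      unfold GT.inputSeq
      rw [dif_pos hjx]
    unfold palSval
    rw [hin1, hin2]
    constructor
    · intro h0 h1 h2
      by_contra hne
      rw [if_pos (Or.inl (by simp only [ne_eq, Sum.inl.injEq]; exact hne))] at h0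
      exact one_ne_zero h0
    · intro heq
      rw [if_neg]
      push_neg
      refine ⟨?_, by omega⟩
      simp only [ne_eq, Sum.inl.injEq, not_not]
      exact heq hjx hrx
  constructor
  · intro hall
    apply List.ext_get (by simp)
    intro m h1 h2
    have hm : m < x.length := h2
    have hkey := (hchar ⟨m, by omega⟩ hm).mp (hall ⟨m, by omega⟩ hm)
    have hg := hkey hm (by omega)
    simp only [List.get_eq_getElem, List.getElem_reverse]
    simpa using hg
  · intro hrev j hjL
    rw [hchar j hjL]
    intro h1 h2
    have h3 : (j : ℕ) < x.reverse.length := by simpa using h1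
    have hre : x.reverse[(j : ℕ)]'h3 = x[x.length - 1 - (j : ℕ)]'h2 :=
      List.getElem_reverse h3
    simp only [hrev] at hre
    simp only [List.get_eq_getElem]
    exact hre.symm
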